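/- Let k ≥ 1, let the student acquaintance graph G = (I, E) contain a spanning tree T such that every vertex of G is incident to at most k − 1 edges of E not belonging to T, and suppose that for every school s the restriction of ≻_s to I is single-peaked on T. Then there exists a feasible matching that is Pareto efficient, locally EF-(k−1) with respect to G, and locally ERF-(k−1) with respect to G. -/

import Mathlib

/-!
Serve the students one at a time, each taking her favourite school that still has a free
seat. The outcome is feasible and Pareto efficient, and nobody envies a student served after
her. Single-peakedness on `T` implies that each school ranks at most one `T`-neighbour of a
student above her, and on a finite forest every map sending each vertex to a neighbour has a
2-cycle. Hence among the remaining students there is always either one whom no remaining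
neighbour outranks at her favourite school, who is served next, or two neighbours each
outranking the other at the other's favourite school, who are served in a row. This order
produces no envy along `T`, so every envy runs along one of the at most `k - 1` non-tree
edges at a student.
-/

section Defs

variable {I S : Type*}

/-- Students' preference profiles: `pI i a b` means student `i` strictly prefers option `a`
to option `b`, where `none` represents being unmatched. -/
abbrev StudentPrefs (I S : Type*) := I → Option S → Option S → Prop

/-- Schools' preference profiles: `pS s a b` means school `s` strictly prefers `a` to `b`,
where `none` represents leaving a seat vacant. -/
abbrev SchoolPrefs (I S : Type*) := S → Option I → Option I → Prop

/-- Each student's preference is a strict linear order on `S ∪ {∅}`. -/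
def ValidStudentPrefs (pI : StudentPrefs I S) : Prop :=
  ∀ i, IsStrictTotalOrder (Option S) (pI i)

/-- Each school's preference is a strict linear order on `I ∪ {∅}`. -/
def ValidSchoolPrefs (pS : SchoolPrefs I S) : Prop :=
  ∀ s, IsStrictTotalOrder (Option I) (pS s)

/-- A matching `μ : I → Option S` is feasible if each school's quota is respected. -/
def Feasible (q : S → ℕ) (μ : I → Option S) : Prop :=
  ∀ s : S, {i | μ i = some s}.ncard ≤ q s

/-- Student `i` has justified envy toward student `i'` in matching `μ`. -/
def JEnvy (pI : StudentPrefs I S) (pS : SchoolPrefs I S)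
    (μ : I → Option S) (i i' : I) : Prop :=
  ∃ s : S, μ i' = some s ∧ pI i (some s) (μ i) ∧ pS s (some i) (some i')

/-- Local envy: justified envy toward a neighbor in the student acquaintance graph `G`. -/
def LocalEnvy (G : SimpleGraph I) (pI : StudentPrefs I S) (pS : SchoolPrefs I S)
    (μ : I → Option S) (i i' : I) : Prop :=
  JEnvy pI pS μ i i' ∧ G.Adj i i'

/-- Locally envy-free matching. -/
def LEF (G : SimpleGraph I) (pI : StudentPrefs I S) (pS : SchoolPrefs I S)
    (μ : I → Option S) : Prop :=
  ∀ i i', ¬ LocalEnvy G pI pS μ i i'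

/-- Fair (justified-envy-free) matching. -/
def Fair (pI : StudentPrefs I S) (pS : SchoolPrefs I S) (μ : I → Option S) : Prop :=
  ∀ i i', ¬ JEnvy pI pS μ i i'

/-- Locally envy-free up to `k` peers: every student has local envy toward at most `k` students. -/
def LocEF (G : SimpleGraph I) (pI : StudentPrefs I S) (pS : SchoolPrefs I S)
    (k : ℕ) (μ : I → Option S) : Prop :=
  ∀ i, {i' | LocalEnvy G pI pS μ i i'}.ncard ≤ k

/-- Locally envy-receiving-free up to `k` peers: for every student at most `k` students
have local envy toward her. -/
def LocERF (G : SimpleGraph I) (pI : StudentPrefs I S) (pS : SchoolPrefs I S)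
    (k : ℕ) (μ : I → Option S) : Prop :=
  ∀ i, {i' | LocalEnvy G pI pS μ i' i}.ncard ≤ k

/-- `μ'` Pareto dominates `μ`. -/
def Dominates (pI : StudentPrefs I S) (μ' μ : I → Option S) : Prop :=
  (∀ i, μ' i = μ i ∨ pI i (μ' i) (μ i)) ∧ (∃ i, pI i (μ' i) (μ i))

/-- A feasible matching is Pareto efficient if no feasible matching Pareto dominates it. -/
def ParetoEfficient (pI : StudentPrefs I S) (q : S → ℕ) (μ : I → Option S) : Prop :=
  ∀ μ', Feasible q μ' → ¬ Dominates pI μ' μ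

/-- `(i, s)` is a mutually-best pair. -/
def MBPair (pI : StudentPrefs I S) (pS : SchoolPrefs I S) (i : I) (s : S) : Prop :=
  (∀ x : Option S, x ≠ some s → pI i (some s) x) ∧
  (∀ y : Option I, y ≠ some i → pS s (some i) y)

/-- A matching is mutually-best if every mutually-best pair is matched. -/
def MutuallyBest (pI : StudentPrefs I S) (pS : SchoolPrefs I S) (μ : I → Option S) : Prop :=
  ∀ i s, MBPair pI pS i s → μ i = some s

/-- The set of the `m` most-preferred elements under a strict order `r`
(`r j i` meaning `j` is strictly preferred to `i`). -/
def topSet (r : I → I → Prop) (m : ℕ) : Set I := {i | {j | r j i}.ncard < m}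

/-- A strict linear order on `I` is single-peaked on the graph `G` if for each
`m ∈ {1, …, |I|}` the set of the `m` most-preferred elements induces a connected
subgraph of `G`. -/
def SinglePeakedOn (G : SimpleGraph I) (r : I → I → Prop) : Prop :=
  ∀ m : ℕ, 1 ≤ m → m ≤ Nat.card I → (G.induce (topSet r m)).Connected

/-- `(T, bag)` is a tree decomposition of `G`. -/
structure IsTreeDecomp {V : Type*} (G : SimpleGraph I) (T : SimpleGraph V)
    (bag : V → Set I) : Prop where
  tree : T.IsTree
  covers : ∀ i : I, ∃ t, i ∈ bag t
  subtree : ∀ i : I, (T.induce {t | i ∈ bag t}).Connected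
  edges : ∀ ⦃i i' : I⦄, G.Adj i i' → ∃ t, i ∈ bag t ∧ i' ∈ bag t

/-- `G` has treewidth at most `k`: it admits a tree decomposition of width at most `k`. -/
def TreewidthAtMost (G : SimpleGraph I) (k : ℕ) : Prop :=
  ∃ (V : Type) (T : SimpleGraph V) (bag : V → Set I),
    Finite V ∧ IsTreeDecomp G T bag ∧ ∀ t, (bag t).ncard ≤ k + 1

/-- `G` is `k`-degenerate: there is a linear ordering of the vertices (an injection
into `ℕ`) such that every vertex has at most `k` neighbors occurring strictly later. -/
def Degenerate (G : SimpleGraph I) (k : ℕ) : Prop :=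
  ∃ ord : I → ℕ, Function.Injective ord ∧
    ∀ i, {i' | G.Adj i i' ∧ ord i < ord i'}.ncard ≤ k

/-- The first index `j` in the list `L` of bags such that `i ∈ bag (L.get j)`. -/
noncomputable def firstBagIdx {V : Type*} (L : List V) (bag : V → Set I) (i : I) : ℕ :=
  sInf {j | ∃ h : j < L.length, i ∈ bag (L.get ⟨j, h⟩)}

/-- A strict linear order on `I` is single-peaked on a tree decomposition `(T, bag)` if
there is a sequence of nodes covering all vertices, each node after the first adjacent in
`T` to an earlier one, such that vertices first covered earlier are preferred. -/
def SinglePeakedOnTD {V : Type*} (T : SimpleGraph V) (bag : V → Set I)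
    (r : I → I → Prop) : Prop :=
  ∃ L : List V,
    (∀ i : I, ∃ j : ℕ, ∃ h : j < L.length, i ∈ bag (L.get ⟨j, h⟩)) ∧
    (∀ j : ℕ, ∀ h : j < L.length, 1 ≤ j →
      ∃ j' : ℕ, ∃ h' : j' < L.length, j' < j ∧ T.Adj (L.get ⟨j', h'⟩) (L.get ⟨j, h⟩)) ∧
    (∀ i i' : I, firstBagIdx L bag i < firstBagIdx L bag i' → r i i')

/-- `(i, s)` is a blocking pair for the feasible matching `μ`. -/
def BlockingPair (pI : StudentPrefs I S) (pS : SchoolPrefs I S) (q : S → ℕ)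
    (μ : I → Option S) (i : I) (s : S) : Prop :=
  μ i ≠ some s ∧ pI i (some s) (μ i) ∧
  (({i' | μ i' = some s}.ncard < q s ∧ pS s (some i) none) ∨
   ({i' | μ i' = some s}.ncard = q s ∧
     ∃ i₀, μ i₀ = some s ∧
       (∀ i₁, μ i₁ = some s → i₁ = i₀ ∨ pS s (some i₁) (some i₀)) ∧
       pS s (some i) (some i₀)))

/-- A matching is locally stable if for every blocking pair `(i, s)`, no neighbor of `i`
is matched to `s`. -/
def LocallyStable (G : SimpleGraph I) (pI : StudentPrefs I S) (pS : SchoolPrefs I S)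
    (q : S → ℕ) (μ : I → Option S) : Prop :=
  ∀ i s, BlockingPair pI pS q μ i s → ∀ i', G.Adj i i' → μ i' ≠ some s

/-- Strategyproofness of a mechanism `f` (the schools' side being fixed). -/
def Strategyproof (f : StudentPrefs I S → (I → Option S)) : Prop :=
  ∀ pI : StudentPrefs I S, ValidStudentPrefs pI → ∀ i : I,
    ∀ pI' : StudentPrefs I S, ValidStudentPrefs pI' →
      (∀ i'' : I, i'' ≠ i → pI' i'' = pI i'') →
      f pI i = f pI' i ∨ pI i (f pI i) (f pI' i)

end Defs


namespace SimpleGraph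

variable {V : Type*} {G : SimpleGraph V}

def iterateWalk (f : V → V) (hf : ∀ v, G.Adj v (f v)) :
    (n : ℕ) → (v : V) → G.Walk v (f^[n] v)
  | 0, _ => Walk.nil
  | n + 1, v => Walk.cons (hf v) (iterateWalk f hf n (f v))

variable {f : V → V}

lemma length_iterateWalk (hf : ∀ v, G.Adj v (f v)) (n : ℕ) (v : V) :
    (iterateWalk f hf n v).length = n := by
  induction n generalizing v with
  | zero => rfl
  | succ n ih => simp [iterateWalk, ih]

lemma edges_iterateWalk_succ (hf : ∀ v, G.Adj v (f v)) (n : ℕ) (v : V) :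
    (iterateWalk f hf (n + 1) v).edges = s(v, f v) :: (iterateWalk f hf n (f v)).edges :=
  rfl

lemma isChain_edges_iterateWalk (hf : ∀ v, G.Adj v (f v)) (hf2 : ∀ v, f (f v) ≠ v)
    (n : ℕ) (v : V) :
    (iterateWalk f hf n v).edges.IsChain (· ≠ ·) := by
  induction n generalizing v with
  | zero => simp [iterateWalk]
  | succ n ih =>
    cases n with
    | zero => simp [iterateWalk]
    | succ n =>
      have ih' := ih (f v)
      rw [edges_iterateWalk_succ] at ih'
      rw [edges_iterateWalk_succ, edges_iterateWalk_succ, List.isChain_cons_cons]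
      refine ⟨?_, ih'⟩
      simp only [ne_eq, Sym2.eq_iff, not_or, not_and]
      exact ⟨fun h => absurd h (hf v).ne, fun h => absurd h.symm (hf2 v)⟩

/-- Otherwise iterating `f` would trace a path longer than the number of vertices. -/
theorem IsAcyclic.exists_apply_apply_eq [Finite V] [Nonempty V] (hG : G.IsAcyclic)
    (hf : ∀ v, G.Adj v (f v)) : ∃ v, f (f v) = v := by
  by_contra! hf2
  have := Fintype.ofFinite V
  have hpath := (hG.isPath_iff_isChain _).2
    (isChain_edges_iterateWalk hf hf2 (Fintype.card V) (Classical.arbitrary V))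
  simpa [length_iterateWalk] using hpath.length_lt

theorem IsAcyclic.exists_unchallenged_or_mutual (hG : G.IsAcyclic) (r : V → V → Prop)
    {R : Finset V} (hR : R.Nonempty) :
    ∃ v ∈ R, (∀ u ∈ R, G.Adj v u → ¬ r u v) ∨
      ∃ u ∈ R, G.Adj v u ∧ r u v ∧ r v u := by
  by_contra! h
  choose g hgR hgadj hgr using fun v : (R : Set V) => (h v v.2).1
  have : Nonempty (R : Set V) := hR.to_subtype
  obtain ⟨v, hv⟩ := (hG.induce (R : Set V)).exists_apply_apply_eq
    (f := fun v => ⟨g v, hgR v⟩) (fun v => induce_adj.2 (hgadj v))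
  have hback := hgr ⟨g v, hgR v⟩
  simp only [Subtype.ext_iff] at hv
  rw [hv] at hback
  exact (h v v.2).2 (g v) (hgR v) (hgadj v) (hgr v) hback

end SimpleGraph

section SinglePeaked

variable {I : Type*}

def AtMostOneBetterNeighbor (T : SimpleGraph I) (r : I → I → Prop) : Prop :=
  ∀ ⦃v u w : I⦄, T.Adj v u → T.Adj v w → r u v → r w v → u = w

/-- If `u ≠ w` were two neighbours ranked above `v`, the `m` best students, for `m` the
number ranked above `v`, would contain `u` and `w` but not `v`; connecting `u` to `w` inside
them yields a second path besides `u - v - w`. -/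
theorem SinglePeakedOn.atMostOneBetterNeighbor [Finite I] {T : SimpleGraph I}
    {r : I → I → Prop} [IsStrictOrder I r] (hT : T.IsAcyclic) (hsp : SinglePeakedOn T r) :
    AtMostOneBetterNeighbor T r := by
  classical
  intro v u w hvu hvw hu hw
  by_contra hne
  set m := {j | r j v}.ncard
  have htop : ∀ {x}, r x v → x ∈ topSet r m := fun {x} hx =>
    Set.ncard_lt_ncard ⟨fun j hj => _root_.trans hj hx, fun h => irrefl x (h hx)⟩
      (Set.toFinite _)
  have hv : v ∉ topSet r m := lt_irrefl m
  have hm : 1 ≤ m := (Set.ncard_pos (Set.toFinite _)).2 ⟨u, hu⟩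
  obtain ⟨W⟩ := (hsp m hm (Set.ncard_le_card _)).preconnected ⟨u, htop hu⟩ ⟨w, htop hw⟩
  let W' := W.map (SimpleGraph.Embedding.induce _).toHom
  have hvW' : v ∉ W'.support := by
    simp only [W', SimpleGraph.Walk.support_map, List.mem_map, not_exists, not_and]
    exact fun z _ hz => hv (hz ▸ z.2)
  have hpath : (SimpleGraph.Walk.cons hvu.symm (.cons hvw .nil) : T.Walk u w).IsPath := by
    simp [hvu.ne', hvw.ne, hne]
  have heq : W'.toPath = ⟨_, hpath⟩ := (hT.subsingleton_path _ _).elim _ _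
  have hvP : v ∈ W'.toPath.1.support := by
    rw [heq]
    simp
  exact hvW' (SimpleGraph.Walk.support_toPath_subset_support W' hvP)

end SinglePeaked

section SerialDictatorship

open Finset

variable {I S : Type*} {pI : StudentPrefs I S} {a : S → ℕ} {o : Option S}

def Available (a : S → ℕ) : Option S → Prop
  | none => True
  | some s => 0 < a s

def IsBestAvailable (pI : StudentPrefs I S) (a : S → ℕ) (i : I) (o : Option S) : Prop :=
  Available a o ∧ ∀ x, Available a x → ¬ pI i x o

lemma exists_isBestAvailable [Finite S] (hpI : ValidStudentPrefs pI) (a : S → ℕ) (i : I) :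
    ∃ o, IsBestAvailable pI a i o := by
  have := hpI i
  obtain ⟨o, ho, hmin⟩ := (Finite.wellFounded_of_trans_of_irrefl (pI i)).has_min
    {x | Available a x} ⟨none, trivial⟩
  exact ⟨o, ho, hmin⟩

variable [DecidableEq S]

def residualCapacity (a : S → ℕ) : Option S → S → ℕ
  | none => a
  | some s => Function.update a s (a s - 1)

lemma Available.of_residualCapacity {x : Option S}
    (h : Available (residualCapacity a o) x) : Available a x := by
  rcases o with _ | s
  · exact h
  rcases x with _ | t
  · trivial
  by_cases hts : t = s
  · subst hts
    simp only [Available, residualCapacity, Function.update_self] at h ⊢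
    omega
  · simpa [Available, residualCapacity, Function.update_of_ne hts] using h

lemma Available.residualCapacity_of_ne {x : Option S} (h : Available a x)
    (hxo : x ≠ o) : Available (residualCapacity a o) x := by
  rcases o with _ | s
  · exact h
  rcases x with _ | t
  · trivial
  have hts : t ≠ s := fun hts => hxo (congrArg some hts)
  simpa [Available, residualCapacity, Function.update_of_ne hts] using h

lemma IsBestAvailable.residualCapacity {i : I} {o' : Option S}
    (h : IsBestAvailable pI a i o) (ho : Available (residualCapacity a o') o) :
    IsBestAvailable pI (residualCapacity a o') i o :=
  ⟨ho, fun x hx => h.2 x hx.of_residualCapacity⟩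

variable {R : Finset I} {μ μ' : I → Option S}

def FitsIn (R : Finset I) (a : S → ℕ) (μ : I → Option S) : Prop :=
  ∀ s, #{i ∈ R | μ i = some s} ≤ a s

lemma fitsIn_congr (h : ∀ i ∈ R, μ i = μ' i) : FitsIn R a μ ↔ FitsIn R a μ' := by
  have hfilter : ∀ s, {i ∈ R | μ i = some s} = {i ∈ R | μ' i = some s} := fun s =>
    filter_congr fun i hi => by rw [h i hi]
  simp only [FitsIn, hfilter]

lemma FitsIn.available (h : FitsIn R a μ) {i : I} (hi : i ∈ R) : Available a (μ i) := by
  rcases hμi : μ i with _ | s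
  · trivial
  exact (card_pos.2 ⟨i, mem_filter.2 ⟨hi, hμi⟩⟩).trans_le (h s)

lemma fitsIn_insert_iff [DecidableEq I] {v : I} (hv : v ∉ R) :
    FitsIn (insert v R) a μ ↔
      Available a (μ v) ∧ FitsIn R (residualCapacity a (μ v)) μ := by
  have hcard : ∀ s, #{i ∈ insert v R | μ i = some s}
      = #{i ∈ R | μ i = some s} + if μ v = some s then 1 else 0 := by
    intro s
    rw [filter_insert]
    split_ifs
    · exact card_insert_of_notMem fun h => hv (mem_filter.1 h).1
    · rfl
  rcases hμv : μ v with _ | s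
  · simp [FitsIn, Available, residualCapacity, hcard, hμv]
  simp only [FitsIn, Available, residualCapacity, Function.update_apply, hcard, hμv,
    Option.some_inj]
  refine ⟨fun h => ⟨by simpa using (h s).trans_lt' (by simp), fun t => ?_⟩, fun h t => ?_⟩
  · have := h t
    split_ifs at * <;> subst_vars <;> first | omega | contradiction
  · have := h.2 t
    split_ifs at * <;> subst_vars <;> first | omega | contradiction

end SerialDictatorship

section TreeEnvyFree

open Finset

variable {I S : Type*} [DecidableEq S] {pI : StudentPrefs I S} {pS : SchoolPrefs I S}
  {T : SimpleGraph I} {a : S → ℕ} {R : Finset I} {μ : I → Option S} {v : I} {o : Option S}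

def ParetoOn (pI : StudentPrefs I S) (R : Finset I) (a : S → ℕ) (μ : I → Option S) : Prop :=
  FitsIn R a μ ∧ ∀ μ', FitsIn R a μ' →
    (∀ i ∈ R, μ' i = μ i ∨ pI i (μ' i) (μ i)) → ∀ i ∈ R, μ' i = μ i

def TreeEnvyFreeOn (T : SimpleGraph I) (pI : StudentPrefs I S) (pS : SchoolPrefs I S)
    (R : Finset I) (μ : I → Option S) : Prop :=
  ∀ i ∈ R, ∀ i' ∈ R, T.Adj i i' → ¬ JEnvy pI pS μ i i'

variable [DecidableEq I]

lemma ParetoOn.insert (hv : v ∉ R) (ho : IsBestAvailable pI a v o)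
    (h : ParetoOn pI R (residualCapacity a o) μ) :
    ParetoOn pI (insert v R) a (Function.update μ v o) := by
  have hR : ∀ i ∈ R, Function.update μ v o i = μ i := fun i hi =>
    Function.update_of_ne (ne_of_mem_of_not_mem hi hv) _ _
  refine ⟨?_, fun μ' hfit hweak => ?_⟩
  · rw [fitsIn_insert_iff hv, Function.update_self, fitsIn_congr hR]
    exact ⟨ho.1, h.1⟩
  rw [fitsIn_insert_iff hv] at hfit
  have hv' : μ' v = o := by
    simpa [ho.2 _ hfit.1] using hweak v (mem_insert_self v R)
  rw [hv'] at hfit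
  have hμ' := h.2 μ' hfit.2 fun i hi => hR i hi ▸ hweak i (mem_insert_of_mem hi)
  intro i hi
  rcases mem_insert.1 hi with rfl | hi
  · simpa using hv'
  · rw [hR i hi]
    exact hμ' i hi

/-- The new student `v` envies nobody, having taken her best available option. -/
lemma TreeEnvyFreeOn.insert (hv : v ∉ R) (ho : IsBestAvailable pI a v o)
    (hfit : FitsIn R (residualCapacity a o) μ) (h : TreeEnvyFreeOn T pI pS R μ)
    (hnew : ∀ u ∈ R, T.Adj u v → ∀ s, o = some s → pS s (some u) (some v) →
      ¬ pI u (some s) (μ u)) :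
    TreeEnvyFreeOn T pI pS (insert v R) (Function.update μ v o) := by
  have hR : ∀ i ∈ R, Function.update μ v o i = μ i := fun i hi =>
    Function.update_of_ne (ne_of_mem_of_not_mem hi hv) _ _
  rintro i hi i' hi' hadj ⟨s, hs, hpref, hrank⟩
  rcases mem_insert.1 hi with rfl | hiR <;> rcases mem_insert.1 hi' with rfl | hi'R
  · exact hadj.ne rfl
  · rw [hR i' hi'R] at hs
    rw [Function.update_self] at hpref
    exact ho.2 _ (hs ▸ hfit.available hi'R).of_residualCapacity hpref
  · rw [Function.update_self] at hs
    rw [hR i hiR] at hpref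
    exact hnew i hiR hadj s hs hrank hpref
  · rw [hR i' hi'R] at hs
    rw [hR i hiR] at hpref
    exact h i hiR i' hi'R hadj ⟨s, hs, hpref, hrank⟩

end TreeEnvyFree

section Construction

open Finset

variable {I S : Type*} [DecidableEq I] [DecidableEq S] {pI : StudentPrefs I S}
  {pS : SchoolPrefs I S} {T : SimpleGraph I}

omit [DecidableEq I] in
lemma fitsIn_univ_iff [Fintype I] {a : S → ℕ} {μ : I → Option S} :
    FitsIn univ a μ ↔ Feasible a μ := by
  simp [FitsIn, Feasible, Set.ncard_eq_toFinset_card']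

/-- By `hstar`, the only neighbour of `p` ranked above her at `s'` is `v`, served after her,
and the only neighbour of `v` ranked above her at `s` is `p`, who prefers `s'`. -/
lemma paretoOn_treeEnvyFreeOn_insert_insert {a : S → ℕ} {R : Finset I} {μ : I → Option S}
    {v p : I} {s s' : S}
    (hstar : ∀ s, AtMostOneBetterNeighbor T fun i i' => pS s (some i) (some i'))
    (hvR : v ∉ insert p R) (hpR : p ∉ R) (hvp : T.Adj v p)
    (hbv : IsBestAvailable pI a v (some s)) (hbp : IsBestAvailable pI a p (some s'))
    (hps : pS s (some p) (some v)) (hvs' : pS s' (some v) (some p)) (hss' : s ≠ s')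
    (hpar : ParetoOn pI R (residualCapacity (residualCapacity a (some s)) (some s')) μ)
    (henv : TreeEnvyFreeOn T pI pS R μ) :
    ParetoOn pI (insert v (insert p R)) a
        (Function.update (Function.update μ p (some s')) v (some s)) ∧
      TreeEnvyFreeOn T pI pS (insert v (insert p R))
        (Function.update (Function.update μ p (some s')) v (some s)) := by
  have hbp' : IsBestAvailable pI (residualCapacity a (some s)) p (some s') :=
    hbp.residualCapacity (hbp.1.residualCapacity_of_ne (by simpa using hss'.symm))
  have hpar' := hpar.insert hpR hbp'
  have hvR' : v ∉ R := fun h => hvR (mem_insert_of_mem h)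
  have henv' := henv.insert hpR hbp' hpar.1 fun u hu hup t ht hrank _ =>
    hvR' (hstar s' hup.symm hvp.symm (Option.some_inj.1 ht ▸ hrank) hvs' ▸ hu)
  refine ⟨hpar'.insert hvR hbv, henv'.insert hvR hbv hpar'.1 ?_⟩
  rintro u - huv t ht hrank hpref
  obtain rfl : u = p := hstar s huv.symm hvp (Option.some_inj.1 ht ▸ hrank) hps
  rw [Function.update_self, ← Option.some_inj.1 ht] at hpref
  exact hbp.2 _ hbv.1 hpref

theorem exists_paretoOn_treeEnvyFreeOn [Finite S] (hT : T.IsAcyclic)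
    (hpI : ValidStudentPrefs pI) (hpS : ValidSchoolPrefs pS)
    (hstar : ∀ s, AtMostOneBetterNeighbor T fun i i' => pS s (some i) (some i'))
    (R : Finset I) (a : S → ℕ) :
    ∃ μ, ParetoOn pI R a μ ∧ TreeEnvyFreeOn T pI pS R μ := by
  induction R using Finset.strongInduction generalizing a with
  | H R ih =>
  rcases R.eq_empty_or_nonempty with rfl | hR
  · exact ⟨fun _ => none, ⟨by simp [FitsIn], by simp⟩, by simp [TreeEnvyFreeOn]⟩
  choose best hbest using exists_isBestAvailable hpI a
  obtain ⟨v, hv, hsafe | ⟨p, hp, hvp, ⟨s, hbv, hps⟩, ⟨s', hbp, hvs'⟩⟩⟩ :=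
    hT.exists_unchallenged_or_mutual
      (fun u v => ∃ s, best v = some s ∧ pS s (some u) (some v)) hR
  · obtain ⟨μ, hpar, henv⟩ := ih (R.erase v) (erase_ssubset hv) (residualCapacity a (best v))
    have hvR : v ∉ R.erase v := notMem_erase v R
    rw [← insert_erase hv]
    exact ⟨_, hpar.insert hvR (hbest v), henv.insert hvR (hbest v) hpar.1
      fun u hu huv s hs hrank _ => hsafe u (mem_of_mem_erase hu) huv.symm ⟨s, hs, hrank⟩⟩
  have hss' : s ≠ s' := by
    rintro rfl
    have := hpS s
    exact asymm hps hvs'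
  have hpR : p ∈ R.erase v := mem_erase.2 ⟨hvp.ne', hp⟩
  obtain ⟨μ, hpar, henv⟩ := ih ((R.erase v).erase p)
    ((erase_ssubset hpR).trans (erase_ssubset hv))
    (residualCapacity (residualCapacity a (some s)) (some s'))
  have hvR : v ∉ insert p ((R.erase v).erase p) := by
    rw [insert_erase hpR]
    exact notMem_erase v R
  have := paretoOn_treeEnvyFreeOn_insert_insert hstar hvR (notMem_erase p _) hvp
    (hbv ▸ hbest v) (hbp ▸ hbest p) hps hvs' hss' hpar henv
  rw [insert_erase hpR, insert_erase hv] at this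
  exact ⟨_, this⟩

end Construction

theorem pe_locef_locerf_on_tree_plus_edges_general {I S : Type*} [Fintype I] [Fintype S]
    (k : ℕ)
    (G T : SimpleGraph I) (hT : T.IsTree)
    (hextra : ∀ i : I, {i' | G.Adj i i' ∧ ¬ T.Adj i i'}.ncard ≤ k - 1)
    (pI : StudentPrefs I S) (pS : SchoolPrefs I S) (q : S → ℕ)
    (hpI : ValidStudentPrefs pI) (hpS : ValidSchoolPrefs pS)
    (hsp : ∀ s : S, SinglePeakedOn T (fun i i' => pS s (some i) (some i'))) :
    ∃ μ : I → Option S, Feasible q μ ∧ ParetoEfficient pI q μ ∧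
      LocEF G pI pS (k - 1) μ ∧ LocERF G pI pS (k - 1) μ := by
  classical
  have hstar : ∀ s, AtMostOneBetterNeighbor T fun i i' => pS s (some i) (some i') := by
    intro s
    have := hpS s
    have : IsStrictOrder I fun i i' => pS s (some i) (some i') :=
      { irrefl := fun i => irrefl (some i), trans := fun _ _ _ => _root_.trans }
    exact (hsp s).atMostOneBetterNeighbor hT.isAcyclic
  obtain ⟨μ, ⟨hfit, hpe⟩, henvy⟩ :=
    exists_paretoOn_treeEnvyFreeOn hT.isAcyclic hpI hpS hstar Finset.univ q
  have hoff : ∀ i i', LocalEnvy G pI pS μ i i' → G.Adj i i' ∧ ¬ T.Adj i i' :=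
    fun i i' ⟨hJ, hG⟩ =>
      ⟨hG, fun hT' => henvy i (Finset.mem_univ _) i' (Finset.mem_univ _) hT' hJ⟩
  refine ⟨μ, fitsIn_univ_iff.1 hfit, ?_, fun i => ?_, fun i => ?_⟩
  · rintro μ' hfit' ⟨hweak, i, hi⟩
    rw [hpe μ' (fitsIn_univ_iff.2 hfit') (fun i _ => hweak i) i (Finset.mem_univ i)] at hi
    have := hpI i
    exact irrefl _ hi
  · exact (Set.ncard_le_ncard (fun i' => hoff i i')).trans (hextra i)
  · refine (Set.ncard_le_ncard fun i' h => ?_).trans (hextra i)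
    exact (hoff i' i h).imp G.adj_symm fun h h' => h h'.symm

/-- if `G` contains a spanning tree `T` with every vertex incident to at most
`k - 1` non-tree edges, and schools' preferences are single-peaked on `T`, then a feasible
matching exists that is Pareto efficient, locally EF-(k-1), and locally ERF-(k-1). -/
theorem pe_locef_locerf_on_tree_plus_edges {I S : Type*} [Fintype I] [Fintype S] [Nonempty I]
    (k : ℕ) (hk : 1 ≤ k)
    (G T : SimpleGraph I) (hTG : T ≤ G) (hT : T.IsTree)
    (hextra : ∀ i : I, {i' | G.Adj i i' ∧ ¬ T.Adj i i'}.ncard ≤ k - 1)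
    (pI : StudentPrefs I S) (pS : SchoolPrefs I S) (q : S → ℕ)
    (hpI : ValidStudentPrefs pI) (hpS : ValidSchoolPrefs pS)
    (hsp : ∀ s : S, SinglePeakedOn T (fun i i' => pS s (some i) (some i'))) :
    ∃ μ : I → Option S, Feasible q μ ∧ ParetoEfficient pI q μ ∧
      LocEF G pI pS (k - 1) μ ∧ LocERF G pI pS (k - 1) μ :=
  pe_locef_locerf_on_tree_plus_edges_general k G T hT hextra pI pS q hpI hpS hsp
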